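/- arXiv:2201.01910 — 2 statements merged into one kernel-verified Lean document; each statement's English description precedes it below -/
import Mathlib

section
/- Let R be a commutative ring, r ∈ R, and let M and N be R-modules. Let f : M → N and g : N → M be R-linear maps, let d ≤ c be natural numbers, and let u ∈ R be 1 or −1, such that r^d • (g ∘ f) = u • r^c • id_M (i.e. for all α ∈ M, r^d • g(f(α)) = u • r^c • α). If n is a natural number such that r^n annihilates the r-power-torsion submodule of N, then r^{(c−d) + max(d, n)} annihilates the r-power-torsion submodule of M. -/
/-- If `r^d • (g ∘ f) = u • r^c • id_M` with `d ≤ c` and `u = ±1`, and `r^n` annihilates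
the `r`-power-torsion of `N`, then `r^((c-d) + max d n)` annihilates the
`r`-power-torsion of `M`. -/
theorem torsion_order_bound {R M N : Type*} [CommRing R]
    [AddCommGroup M] [Module R M] [AddCommGroup N] [Module R N]
    (r : R) (f : M →ₗ[R] N) (g : N →ₗ[R] M)
    (d c : ℕ) (hdc : d ≤ c) (u : R) (hu : u = 1 ∨ u = -1)
    (h : ∀ α : M, r ^ d • g (f α) = u • r ^ c • α)
    (n : ℕ) (hN : ∀ β : N, (∃ k : ℕ, r ^ k • β = 0) → r ^ n • β = 0) :
    ∀ α : M, (∃ k : ℕ, r ^ k • α = 0) → r ^ ((c - d) + max d n) • α = 0 := by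
  rintro α ⟨k, hk⟩
  have hfα : r ^ n • f α = 0 := hN (f α) ⟨k, by rw [← map_smul, hk, map_zero]⟩
  have huu : u * u = 1 := by rcases hu with h' | h' <;> simp [h']
  have h2 : r ^ c • α = u • r ^ d • g (f α) := by
    calc r ^ c • α = (u * u) • r ^ c • α := by rw [huu, one_smul]
      _ = u • (u • r ^ c • α) := by rw [mul_smul]
      _ = u • r ^ d • g (f α) := by rw [← h α]
  calc r ^ ((c - d) + max d n) • α
      = r ^ (max d n - d) • r ^ c • α := by
        rw [smul_smul, ← pow_add]; congr 2; omega
    _ = r ^ (max d n - d) • (u • r ^ d • g (f α)) := by rw [h2]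
    _ = u • r ^ (max d n) • g (f α) := by
        have he : r ^ (max d n - d) * r ^ d = r ^ (max d n) := by
          rw [← pow_add, Nat.sub_add_cancel (le_max_left d n)]
        rw [smul_smul, smul_smul, smul_smul, show r ^ (max d n - d) * u * r ^ d
          = u * (r ^ (max d n - d) * r ^ d) by ring, he]
    _ = u • r ^ (max d n - n) • g (r ^ n • f α) := by
        have he : r ^ (max d n - n) * r ^ n = r ^ (max d n) := by
          rw [← pow_add, Nat.sub_add_cancel (le_max_right d n)]
        rw [map_smul, smul_smul (r ^ (max d n - n)), he]
    _ = 0 := by rw [hfα, map_zero, smul_zero, smul_zero]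
end

section
/- Let R be a commutative ring, r ∈ R, and let M and N be R-modules. Let f : M → N and g : N → M be R-linear maps and let d ≤ b be natural numbers such that r^d • (g ∘ f) = r^d • id_M and r^d • (f ∘ g) = r^d • id_N. Then g ∘ f restricts to the identity on the submodule r^b • M, f ∘ g restricts to the identity on r^b • N, and f restricts to an R-module isomorphism from r^b • M onto r^b • N. -/
/-- If `r^d • (g ∘ f) = r^d • id_M` and `r^d • (f ∘ g) = r^d • id_N` with `d ≤ b`,
then `g ∘ f` is the identity on the submodule `r^b • M`, `f ∘ g` is the identity on
`r^b • N`, and `f` restricts to an isomorphism `r^b • M ≃ r^b • N`. -/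
theorem concordance_pow_smul_iso {R M N : Type*} [CommRing R]
    [AddCommGroup M] [Module R M] [AddCommGroup N] [Module R N]
    (r : R) (f : M →ₗ[R] N) (g : N →ₗ[R] M)
    (d b : ℕ) (hdb : d ≤ b)
    (hgf : ∀ α : M, r ^ d • g (f α) = r ^ d • α)
    (hfg : ∀ β : N, r ^ d • f (g β) = r ^ d • β) :
    (∀ α ∈ LinearMap.range (r ^ b • (LinearMap.id : M →ₗ[R] M)), g (f α) = α) ∧
    (∀ β ∈ LinearMap.range (r ^ b • (LinearMap.id : N →ₗ[R] N)), f (g β) = β) ∧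
    ∃ e : LinearMap.range (r ^ b • (LinearMap.id : M →ₗ[R] M)) ≃ₗ[R]
        LinearMap.range (r ^ b • (LinearMap.id : N →ₗ[R] N)),
      ∀ α : LinearMap.range (r ^ b • (LinearMap.id : M →ₗ[R] M)),
        (e α : N) = f (α : M) := by
  have hb : b = (b - d) + d := (Nat.sub_add_cancel hdb).symm
  have hgf' : ∀ x : M, r ^ b • g (f x) = r ^ b • x := by
    intro x
    rw [hb, pow_add, mul_smul, mul_smul, hgf]
  have hfg' : ∀ y : N, r ^ b • f (g y) = r ^ b • y := by
    intro y
    rw [hb, pow_add, mul_smul, mul_smul, hfg]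
  have hM : ∀ α ∈ LinearMap.range (r ^ b • (LinearMap.id : M →ₗ[R] M)), g (f α) = α := by
    rintro α ⟨x, rfl⟩
    simp only [LinearMap.smul_apply, LinearMap.id_apply, map_smul]
    exact hgf' x
  have hN : ∀ β ∈ LinearMap.range (r ^ b • (LinearMap.id : N →ₗ[R] N)), f (g β) = β := by
    rintro β ⟨y, rfl⟩
    simp only [LinearMap.smul_apply, LinearMap.id_apply, map_smul]
    exact hfg' y
  refine ⟨hM, hN, ?_⟩
  have hf : ∀ α ∈ LinearMap.range (r ^ b • (LinearMap.id : M →ₗ[R] M)),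
      f α ∈ LinearMap.range (r ^ b • (LinearMap.id : N →ₗ[R] N)) := by
    rintro α ⟨x, rfl⟩
    exact ⟨f x, by simp [map_smul]⟩
  have hg : ∀ β ∈ LinearMap.range (r ^ b • (LinearMap.id : N →ₗ[R] N)),
      g β ∈ LinearMap.range (r ^ b • (LinearMap.id : M →ₗ[R] M)) := by
    rintro β ⟨y, rfl⟩
    exact ⟨g y, by simp [map_smul]⟩
  refine ⟨⟨⟨⟨fun α => ⟨f α, hf α α.2⟩, ?_⟩, ?_⟩,
      fun β => ⟨g β, hg β β.2⟩, ?_, ?_⟩, fun α => rfl⟩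
  · intro a b; ext; simp
  · intro c a; ext; simp
  · intro α; ext; exact hM α α.2
  · intro β; ext; exact hN β β.2
end
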